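/- arXiv:1404.2875 — 2 statements merged into one kernel-verified Lean document; each statement's English description precedes it below -/
import Mathlib

section
/- Let X be a compact metric space and let (μ_n) be a sequence of finite signed Borel measures on X converging weakly to a finite signed Borel measure μ. Then ‖μ‖_neg ≤ liminf_{n→∞} ‖μ_n‖_neg; that is, the negative-part mass is lower semicontinuous with respect to weak convergence. -/
/-! By the Hahn decomposition and regularity of finite Borel measures on a metrizable space,
`‖μ‖_neg` is the supremum of `(-∫ φ dμ)⁺` over continuous `φ : X → [0, 1]`: take `φ` an Urysohn
function equal to `1` on a closed set carrying almost all of `μ⁻` and vanishing outside an open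
set of small `μ⁺`-measure. Each `(-∫ φ dμ)⁺` is bounded by `‖μ‖_neg` and continuous under weak
convergence, so their supremum is lower semicontinuous. -/

open MeasureTheory Filter Topology
open scoped ENNReal

/-- The integral of `φ` against a finite signed measure `μ`, defined via the Jordan
decomposition: `∫ φ dμ = ∫ φ dμ⁺_J - ∫ φ dμ⁻_J`. -/
noncomputable def sintegral {X : Type*} [MeasurableSpace X] (μ : SignedMeasure X)
    (φ : X → ℝ) : ℝ :=
  (∫ x, φ x ∂μ.toJordanDecomposition.posPart) - ∫ x, φ x ∂μ.toJordanDecomposition.negPart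

/-- The negative-part mass `‖μ‖_neg` of a finite signed measure: the total mass of the
negative part of its Jordan decomposition (equivalently, the infimum of `ν⁻(X)` over all
decompositions `μ = ν⁺ - ν⁻` into finite positive measures). -/
noncomputable def negMass {X : Type*} [MeasurableSpace X] (μ : SignedMeasure X) : ℝ≥0∞ :=
  μ.toJordanDecomposition.negPart Set.univ

section MeasureBounds

variable {X : Type*} [MeasurableSpace X] {ν : Measure X} {s : Set X} {f : X → ℝ}

lemma measureReal_le_integral_of_indicator_le (hs : MeasurableSet s) (hf : Integrable f ν)
    (hsf : s.indicator 1 ≤ f) : ν.real s ≤ ∫ x, f x ∂ν := by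
  rw [← integral_indicator_one hs]
  exact integral_mono_of_nonneg (ae_of_all _ (Set.indicator_nonneg fun _ _ => zero_le_one)) hf
    (ae_of_all _ hsf)

lemma integral_le_measureReal_of_le_indicator [IsFiniteMeasure ν] (hs : MeasurableSet s)
    (hf : 0 ≤ f) (hfs : f ≤ s.indicator 1) : ∫ x, f x ∂ν ≤ ν.real s := by
  rw [← integral_indicator_one hs]
  exact integral_mono_of_nonneg (ae_of_all _ hf) ((integrable_const 1).indicator hs)
    (ae_of_all _ hfs)

end MeasureBounds

section NegMass

variable {X : Type*} [MeasurableSpace X]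

lemma ofReal_neg_sintegral_le_negMass (μ : SignedMeasure X) {f : X → ℝ} (hf₀ : 0 ≤ f)
    (hf₁ : f ≤ 1) : ENNReal.ofReal (-sintegral μ f) ≤ negMass μ := by
  have hpos : 0 ≤ ∫ x, f x ∂μ.toJordanDecomposition.posPart := integral_nonneg hf₀
  have hneg : ∫ x, f x ∂μ.toJordanDecomposition.negPart
      ≤ μ.toJordanDecomposition.negPart.real Set.univ :=
    integral_le_measureReal_of_le_indicator MeasurableSet.univ hf₀ (by simpa using hf₁)
  rw [negMass, ENNReal.ofReal_le_iff_le_toReal (measure_ne_top _ _), sintegral]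
  exact le_trans (by linarith) hneg

lemma negPart_le_ofReal_neg_sintegral_add_posPart (μ : SignedMeasure X) {F U : Set X}
    (hF : MeasurableSet F) (hU : MeasurableSet U) {f : X → ℝ} (hf : Measurable f)
    (hFf : F.indicator 1 ≤ f) (hfU : f ≤ U.indicator 1) :
    μ.toJordanDecomposition.negPart F
      ≤ ENNReal.ofReal (-sintegral μ f) + μ.toJordanDecomposition.posPart U := by
  set pos := μ.toJordanDecomposition.posPart
  set neg := μ.toJordanDecomposition.negPart
  have hf₀ : 0 ≤ f := fun x => (Set.indicator_nonneg (fun _ _ => zero_le_one) x).trans (hFf x)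
  have hf_int : Integrable f neg := by
    refine (integrable_const 1).mono' hf.aestronglyMeasurable (ae_of_all _ fun x => ?_)
    rw [Real.norm_of_nonneg (hf₀ x)]
    exact (hfU x).trans (Set.indicator_le_self' (fun _ _ => zero_le_one) x)
  have hreal : neg.real F ≤ -sintegral μ f + pos.real U := by
    have := measureReal_le_integral_of_indicator_le hF hf_int hFf
    have := integral_le_measureReal_of_le_indicator (ν := pos) hU hf₀ hfU
    rw [sintegral]
    linarith
  calc neg F = ENNReal.ofReal (neg.real F) := (ofReal_measureReal (measure_ne_top _ _)).symm
    _ ≤ ENNReal.ofReal (-sintegral μ f + pos.real U) := ENNReal.ofReal_le_ofReal hreal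
    _ ≤ ENNReal.ofReal (-sintegral μ f) + pos U := by
      grw [ENNReal.ofReal_add_le, ofReal_measureReal (measure_ne_top _ _)]

end NegMass

section Approximation

variable {X : Type*} [TopologicalSpace X] [TopologicalSpace.PseudoMetrizableSpace X]
  [MeasurableSpace X] [BorelSpace X]

lemma exists_continuous_negMass_le_add (μ : SignedMeasure X) {ε : ℝ≥0∞} (hε : ε ≠ 0) :
    ∃ f : C(X, unitInterval), negMass μ ≤ ENNReal.ofReal (-sintegral μ (fun x => f x)) + ε := by
  set pos := μ.toJordanDecomposition.posPart
  set neg := μ.toJordanDecomposition.negPart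
  have hε₂ : ε / 2 ≠ 0 := by simpa using hε
  obtain ⟨S, hS, hpos_S, hneg_Sc⟩ := μ.toJordanDecomposition.mutuallySingular
  obtain ⟨F, hFS, hF, hneg_F⟩ := hS.exists_isClosed_lt_add (μ := neg) (measure_ne_top _ _) hε₂
  have hpos_F : pos F < ε / 2 := (measure_mono_null hFS hpos_S).trans_lt (pos_iff_ne_zero.2 hε₂)
  obtain ⟨U, hFU, hU, hpos_U⟩ := F.exists_isOpen_lt_of_lt _ hpos_F
  obtain ⟨f, hf_U, hf_F, hf01⟩ := exists_continuous_zero_one_of_isClosed hU.isClosed_compl hF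
    (disjoint_compl_left.mono_right hFU)
  have hFf : F.indicator 1 ≤ f := by
    intro x
    by_cases hx : x ∈ F
    · simp [hx, hf_F hx]
    · simp [hx, (hf01 x).1]
  have hfU : ⇑f ≤ U.indicator 1 := by
    intro x
    by_cases hx : x ∈ U
    · simp [hx, (hf01 x).2]
    · simp [hx, hf_U hx]
  refine ⟨⟨fun x => ⟨f x, hf01 x⟩, by fun_prop⟩, ?_⟩
  calc negMass μ = neg S := measure_congr (ae_eq_univ.2 hneg_Sc).symm
    _ ≤ neg F + ε / 2 := hneg_F.le
    _ ≤ ENNReal.ofReal (-sintegral μ f) + pos U + ε / 2 := by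
      grw [negPart_le_ofReal_neg_sintegral_add_posPart μ hF.measurableSet hU.measurableSet
        f.continuous.measurable hFf hfU]
    _ ≤ ENNReal.ofReal (-sintegral μ f) + ε := by
      grw [hpos_U, add_assoc, ENNReal.add_halves]

theorem negMass_eq_iSup_continuous (μ : SignedMeasure X) :
    negMass μ = ⨆ f : C(X, unitInterval), ENNReal.ofReal (-sintegral μ (fun x => f x)) := by
  refine le_antisymm (ENNReal.le_of_forall_pos_le_add fun ε hε _ => ?_) (iSup_le fun f => ?_)
  · obtain ⟨f, hf⟩ := exists_continuous_negMass_le_add μ (ENNReal.coe_ne_zero.2 hε.ne')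
    exact hf.trans (by gcongr; exact le_iSup_of_le f le_rfl)
  · exact ofReal_neg_sintegral_le_negMass μ (fun x => (f x).2.1) (fun x => (f x).2.2)

end Approximation

theorem negMass_lsc_weak_convergence_general {X : Type*} [MetricSpace X]
    [MeasurableSpace X] [BorelSpace X]
    (μ : SignedMeasure X) (μn : ℕ → SignedMeasure X)
    (h : ∀ φ : X → ℝ, Continuous φ →
      Tendsto (fun n => sintegral (μn n) φ) atTop (𝓝 (sintegral μ φ))) :
    negMass μ ≤ liminf (fun n => negMass (μn n)) atTop := by
  rw [negMass_eq_iSup_continuous]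
  refine iSup_le fun f => ?_
  have hf : Continuous fun x => (f x : ℝ) := continuous_subtype_val.comp f.continuous
  have hlim := (ENNReal.continuous_ofReal.tendsto _).comp (h _ hf).neg
  rw [← hlim.liminf_eq]
  exact liminf_le_liminf (.of_forall fun n =>
    ofReal_neg_sintegral_le_negMass (μn n) (fun x => (f x).2.1) (fun x => (f x).2.2))

/-- Lower semicontinuity of the negative-part mass under weak convergence of finite signed
Borel measures on a compact metric space. -/
theorem negMass_lsc_weak_convergence {X : Type*} [MetricSpace X] [CompactSpace X]
    [MeasurableSpace X] [BorelSpace X]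
    (μ : SignedMeasure X) (μn : ℕ → SignedMeasure X)
    (h : ∀ φ : X → ℝ, Continuous φ →
      Tendsto (fun n => sintegral (μn n) φ) atTop (𝓝 (sintegral μ φ))) :
    negMass μ ≤ liminf (fun n => negMass (μn n)) atTop :=
  negMass_lsc_weak_convergence_general μ μn h
end

section
/- Let X be a compact metric space and μ a finite signed Borel measure on X. Then ‖μ‖_neg = sup { −∫_X φ dμ : φ : X → ℝ continuous, 0 ≤ φ ≤ 1 }. -/
/-!
The bound `-∫ φ dμ = ∫ φ dμ⁻ - ∫ φ dμ⁺ ≤ μ⁻(X)` is immediate for `0 ≤ φ ≤ 1`. Conversely, the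
Jordan parts `μ⁺` and `μ⁻` are carried by disjoint sets. Regularity of finite Borel measures on a
metric space gives a closed set `F` carrying all of `μ⁻` up to `ε` and an open `U ⊇ F` of
`μ⁺`-mass below `ε`, and an Urysohn function equal to `1` on `F` and `0` off `U` brings
`-∫ φ dμ` within `2ε` of `μ⁻(X)`.
-/

open MeasureTheory
open scoped ENNReal

open Set

namespace MeasureTheory

variable {X : Type*} [MeasurableSpace X] {μ ν : Measure X}

theorem measureReal_le_integral_of_indicator_le [IsFiniteMeasure μ] {s : Set X}
    (hs : MeasurableSet s) {f : X → ℝ} (hf : Integrable f μ) (h : s.indicator 1 ≤ f) :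
    μ.real s ≤ ∫ x, f x ∂μ := by
  rw [← integral_indicator_one hs]
  exact integral_mono ((integrable_const 1).indicator hs) hf h

theorem integral_le_measureReal_of_le_indicator [IsFiniteMeasure μ] {s : Set X}
    (hs : MeasurableSet s) {f : X → ℝ} (hf : 0 ≤ f) (h : f ≤ s.indicator 1) :
    ∫ x, f x ∂μ ≤ μ.real s := by
  rw [← integral_indicator_one hs]
  exact integral_mono_of_nonneg (.of_forall hf) ((integrable_const 1).indicator hs) (.of_forall h)

namespace Measure.MutuallySingular

variable [TopologicalSpace X] [OpensMeasurableSpace X]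

theorem exists_isClosed_subset_isOpen [IsFiniteMeasure ν] [μ.OuterRegular] [ν.WeaklyRegular]
    (h : μ ⟂ₘ ν) {ε : ℝ≥0∞} (hε : ε ≠ 0) :
    ∃ F U, IsClosed F ∧ IsOpen U ∧ F ⊆ U ∧ μ U < ε ∧ ν Fᶜ < ε := by
  obtain ⟨A, hA, hμA, hνA⟩ := h
  obtain ⟨F, hFA, hF, hνAF⟩ := hA.exists_isClosed_sdiff_lt (measure_ne_top ν A) hε
  obtain ⟨U, hFU, hU, hμU⟩ := F.exists_isOpen_lt_of_lt ε <| by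
    rw [measure_mono_null hFA hμA]; exact pos_iff_ne_zero.2 hε
  refine ⟨F, U, hF, hU, hFU, hμU, ?_⟩
  calc ν Fᶜ ≤ ν (A \ F) + ν Aᶜ := by
        refine (measure_mono fun x hx => ?_).trans (measure_union_le _ _)
        by_cases hxA : x ∈ A
        exacts [Or.inl ⟨hxA, hx⟩, Or.inr hxA]
    _ < ε := by rwa [hνA, add_zero]

theorem exists_continuous_integral_sub_integral_ge [NormalSpace X] [IsFiniteMeasure μ]
    [IsFiniteMeasure ν] [μ.OuterRegular] [ν.WeaklyRegular] (h : μ ⟂ₘ ν) {ε : ℝ} (hε : 0 < ε) :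
    ∃ f : X → ℝ, Continuous f ∧ (∀ x, 0 ≤ f x ∧ f x ≤ 1) ∧
      ν.real univ - ε ≤ ∫ x, f x ∂ν - ∫ x, f x ∂μ := by
  obtain ⟨F, U, hF, hU, hFU, hμU, hνF⟩ :=
    h.exists_isClosed_subset_isOpen (ENNReal.ofReal_pos.2 (half_pos hε)).ne'
  obtain ⟨f, hf0, hf1, hf01⟩ := exists_continuous_zero_one_of_isClosed hU.isClosed_compl hF
    (disjoint_compl_left_iff_subset.2 hFU)
  have hfi : ∀ ρ : Measure X, [IsFiniteMeasure ρ] → Integrable f ρ := fun ρ _ =>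
    .of_bound f.continuous.aestronglyMeasurable 1 (.of_forall fun x => by
      rw [Real.norm_of_nonneg (hf01 x).1]; exact (hf01 x).2)
  have hνf : ν.real F ≤ ∫ x, f x ∂ν := by
    refine measureReal_le_integral_of_indicator_le hF.measurableSet (hfi ν) ?_
    exact indicator_le' (fun x hx => (hf1 hx).ge) fun x _ => (hf01 x).1
  have hμf : ∫ x, f x ∂μ ≤ μ.real U := by
    refine integral_le_measureReal_of_le_indicator hU.measurableSet (fun x => (hf01 x).1) ?_
    exact le_indicator (fun x _ => (hf01 x).2) fun x hx => (hf0 hx).le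
  have hνF' : ν.real Fᶜ < ε / 2 := ENNReal.toReal_lt_of_lt_ofReal hνF
  have hμU' : μ.real U < ε / 2 := ENNReal.toReal_lt_of_lt_ofReal hμU
  have hsplit : ν.real univ = ν.real F + ν.real Fᶜ :=
    (measureReal_add_measureReal_compl hF.measurableSet).symm
  exact ⟨f, f.continuous, hf01, by linarith⟩

end Measure.MutuallySingular

end MeasureTheory

section

variable {X : Type*} [MeasurableSpace X]

theorem negMass_toReal (μ : SignedMeasure X) :
    (negMass μ).toReal = μ.toJordanDecomposition.negPart.real univ :=
  rfl

theorem neg_sintegral (μ : SignedMeasure X) (φ : X → ℝ) :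
    -sintegral μ φ =
      ∫ x, φ x ∂μ.toJordanDecomposition.negPart - ∫ x, φ x ∂μ.toJordanDecomposition.posPart := by
  rw [sintegral, neg_sub]

theorem neg_sintegral_le_negMass (μ : SignedMeasure X) {φ : X → ℝ}
    (hφ : ∀ x, 0 ≤ φ x ∧ φ x ≤ 1) : -sintegral μ φ ≤ (negMass μ).toReal := by
  set n := μ.toJordanDecomposition.negPart
  have hpos : 0 ≤ ∫ x, φ x ∂μ.toJordanDecomposition.posPart :=
    integral_nonneg fun x => (hφ x).1
  have hneg : ∫ x, φ x ∂n ≤ n.real univ := by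
    simpa using integral_mono_of_nonneg (.of_forall fun x => (hφ x).1)
      (integrable_const (1 : ℝ) (μ := n)) (.of_forall fun x => (hφ x).2)
  rw [neg_sintegral, negMass_toReal]
  linarith

end

theorem negMass_eq_sup_continuous_general {X : Type*} [MetricSpace X]
    [MeasurableSpace X] [BorelSpace X] (μ : SignedMeasure X) :
    (negMass μ).toReal =
      sSup {r : ℝ | ∃ φ : X → ℝ, Continuous φ ∧ (∀ x, 0 ≤ φ x ∧ φ x ≤ 1) ∧
        r = -sintegral μ φ} := by
  have hle : ∀ r ∈ {r : ℝ | ∃ φ : X → ℝ, Continuous φ ∧ (∀ x, 0 ≤ φ x ∧ φ x ≤ 1) ∧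
      r = -sintegral μ φ}, r ≤ (negMass μ).toReal := by
    rintro _ ⟨φ, -, hφ, rfl⟩
    exact neg_sintegral_le_negMass μ hφ
  refine le_antisymm (le_of_forall_sub_le fun ε hε => ?_)
    (csSup_le ⟨_, 0, continuous_const, fun _ => ⟨le_rfl, zero_le_one⟩, rfl⟩ hle)
  obtain ⟨f, hf, hf01, hfε⟩ :=
    μ.toJordanDecomposition.mutuallySingular.exists_continuous_integral_sub_integral_ge hε
  calc (negMass μ).toReal - ε ≤ -sintegral μ f := by rwa [neg_sintegral, negMass_toReal]
    _ ≤ _ := le_csSup ⟨_, hle⟩ ⟨f, hf, hf01, rfl⟩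

/-- Duality formula for the negative-part mass:
`‖μ‖_neg = sup { -∫ φ dμ : φ continuous, 0 ≤ φ ≤ 1 }`. -/
theorem negMass_eq_sup_continuous {X : Type*} [MetricSpace X] [CompactSpace X]
    [MeasurableSpace X] [BorelSpace X] (μ : SignedMeasure X) :
    (negMass μ).toReal =
      sSup {r : ℝ | ∃ φ : X → ℝ, Continuous φ ∧ (∀ x, 0 ≤ φ x ∧ φ x ≤ 1) ∧
        r = -sintegral μ φ} :=
  negMass_eq_sup_continuous_general μ
end
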